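/- arXiv:1706.06449 — 3 statements merged into one kernel-verified Lean document; each statement's English description precedes it below -/
import Mathlib

section
/- With α_t := α + t₁₁ᾱ + t₁₂β̄, β_t := β + t₂₁ᾱ + t₂₂β̄, γ_t := γ − D(t)γ̄ and D(t) := t₁₁t₂₂ − t₁₂t₂₁ (i.e. t₃₁ = t₃₂ = 0), and with η₀ := α∧β∧γ + i·(α∧ᾱ + β∧β̄)∧(γ + γ̄) + ᾱ∧β̄∧γ̄, for every t = (t₁₁,t₁₂,t₂₁,t₂₂) ∈ ℂ⁴ one has the identity −(α_t∧β_t∧γ_t)∧η₀ = (i(1 + D(t)²) + (t₂₁ − t₁₂)(1 + D(t)))·Ω in the exterior algebra, where Ω := (i·α∧ᾱ)∧(i·β∧β̄)∧(i·γ∧γ̄). (Under the normalization ∫_X Ω = 1 this is the formula Q(u_t, η₀) = i(1 + D(t)²) + (t₂₁ − t₁₂)(1 + D(t)) for the intersection pairing Q(u,v) = −∫_X u∧v.) -/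
noncomputable section

/-- The exterior algebra of `ℂ⁶` in which all cohomology computations on the Iwasawa
manifold are carried out. -/
abbrev Λ6 : Type := ExteriorAlgebra ℂ (Fin 6 → ℂ)

/-- The degree-one generator corresponding to the `i`-th basis vector of `ℂ⁶`. -/
def gen (i : Fin 6) : Λ6 := ExteriorAlgebra.ι ℂ (Pi.single i (1 : ℂ))

/-- `α` -/ def α : Λ6 := gen 0
/-- `β` -/ def β : Λ6 := gen 1
/-- `γ` -/ def γ : Λ6 := gen 2
/-- `ᾱ` -/ def α' : Λ6 := gen 3
/-- `β̄` -/ def β' : Λ6 := gen 4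
/-- `γ̄` -/ def γ' : Λ6 := gen 5

/-- The normalized volume form `Ω = (i·α∧ᾱ)∧(i·β∧β̄)∧(i·γ∧γ̄)`. -/
def Ω : Λ6 := (Complex.I • (α * α')) * (Complex.I • (β * β')) * (Complex.I • (γ * γ'))

/-- The real 3-class `η₀ = α∧β∧γ + i(α∧ᾱ + β∧β̄)∧(γ+γ̄) + ᾱ∧β̄∧γ̄`. -/
def η₀ : Λ6 := α * β * γ + Complex.I • ((α * α' + β * β') * (γ + γ')) + α' * β' * γ'

private lemma gswap (i j : Fin 6) : gen j * gen i = -(gen i * gen j) := by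
  rw [eq_neg_iff_add_eq_zero, add_comm]
  exact ExteriorAlgebra.ι_add_mul_swap _ _

private lemma gswap' (i j : Fin 6) (x : Λ6) :
    gen j * (gen i * x) = -(gen i * (gen j * x)) := by
  rw [← mul_assoc, gswap, ← mul_assoc, neg_mul]

private lemma gsq (i : Fin 6) : gen i * gen i = 0 := ExteriorAlgebra.ι_sq_zero _

private lemma gsq' (i : Fin 6) (x : Λ6) : gen i * (gen i * x) = 0 := by
  rw [← mul_assoc, gsq, zero_mul]

private lemma q0 : α * α = 0 := gsq _
private lemma q0' (x : Λ6) : α * (α * x) = 0 := gsq' _ _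
private lemma q1 : β * β = 0 := gsq _
private lemma q1' (x : Λ6) : β * (β * x) = 0 := gsq' _ _
private lemma q2 : γ * γ = 0 := gsq _
private lemma q2' (x : Λ6) : γ * (γ * x) = 0 := gsq' _ _
private lemma q3 : α' * α' = 0 := gsq _
private lemma q3' (x : Λ6) : α' * (α' * x) = 0 := gsq' _ _
private lemma q4 : β' * β' = 0 := gsq _
private lemma q4' (x : Λ6) : β' * (β' * x) = 0 := gsq' _ _
private lemma q5 : γ' * γ' = 0 := gsq _
private lemma q5' (x : Λ6) : γ' * (γ' * x) = 0 := gsq' _ _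
private lemma w01 : β * α = -(α * β) := gswap _ _
private lemma w01' (x : Λ6) : β * (α * x) = -(α * (β * x)) := gswap' _ _ _
private lemma w02 : γ * α = -(α * γ) := gswap _ _
private lemma w02' (x : Λ6) : γ * (α * x) = -(α * (γ * x)) := gswap' _ _ _
private lemma w03 : α' * α = -(α * α') := gswap _ _
private lemma w03' (x : Λ6) : α' * (α * x) = -(α * (α' * x)) := gswap' _ _ _
private lemma w04 : β' * α = -(α * β') := gswap _ _
private lemma w04' (x : Λ6) : β' * (α * x) = -(α * (β' * x)) := gswap' _ _ _
private lemma w05 : γ' * α = -(α * γ') := gswap _ _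
private lemma w05' (x : Λ6) : γ' * (α * x) = -(α * (γ' * x)) := gswap' _ _ _
private lemma w12 : γ * β = -(β * γ) := gswap _ _
private lemma w12' (x : Λ6) : γ * (β * x) = -(β * (γ * x)) := gswap' _ _ _
private lemma w13 : α' * β = -(β * α') := gswap _ _
private lemma w13' (x : Λ6) : α' * (β * x) = -(β * (α' * x)) := gswap' _ _ _
private lemma w14 : β' * β = -(β * β') := gswap _ _
private lemma w14' (x : Λ6) : β' * (β * x) = -(β * (β' * x)) := gswap' _ _ _
private lemma w15 : γ' * β = -(β * γ') := gswap _ _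
private lemma w15' (x : Λ6) : γ' * (β * x) = -(β * (γ' * x)) := gswap' _ _ _
private lemma w23 : α' * γ = -(γ * α') := gswap _ _
private lemma w23' (x : Λ6) : α' * (γ * x) = -(γ * (α' * x)) := gswap' _ _ _
private lemma w24 : β' * γ = -(γ * β') := gswap _ _
private lemma w24' (x : Λ6) : β' * (γ * x) = -(γ * (β' * x)) := gswap' _ _ _
private lemma w25 : γ' * γ = -(γ * γ') := gswap _ _
private lemma w25' (x : Λ6) : γ' * (γ * x) = -(γ * (γ' * x)) := gswap' _ _ _
private lemma w34 : β' * α' = -(α' * β') := gswap _ _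
private lemma w34' (x : Λ6) : β' * (α' * x) = -(α' * (β' * x)) := gswap' _ _ _
private lemma w35 : γ' * α' = -(α' * γ') := gswap _ _
private lemma w35' (x : Λ6) : γ' * (α' * x) = -(α' * (γ' * x)) := gswap' _ _ _
private lemma w45 : γ' * β' = -(β' * γ') := gswap _ _
private lemma w45' (x : Λ6) : γ' * (β' * x) = -(β' * (γ' * x)) := gswap' _ _ _

/-- The formula `Q(u_t, η₀) = i(1 + D(t)²) + (t₂₁ − t₁₂)(1 + D(t))` for
`u_t = α_t∧β_t∧γ_t` with `t₃₁ = t₃₂ = 0` and `D(t) = t₁₁t₂₂ − t₁₂t₂₁`. -/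
theorem Q_u_t_eta0 (t11 t12 t21 t22 : ℂ) :
    -((α + t11 • α' + t12 • β') * (β + t21 • α' + t22 • β') *
        (γ - (t11 * t22 - t12 * t21) • γ') * η₀)
    = (Complex.I * (1 + (t11 * t22 - t12 * t21) ^ 2)
        + (t21 - t12) * (1 + (t11 * t22 - t12 * t21))) • Ω := by
  simp only [η₀, Ω]
  simp only [sub_eq_add_neg, mul_add, add_mul, smul_mul_assoc, mul_smul_comm, smul_smul,
    smul_add, neg_mul, mul_neg, smul_neg, neg_neg, neg_add, mul_assoc]
  simp only [q0, q0', q1, q1', q2, q2', q3, q3', q4, q4', q5, q5', w01, w01', w02, w02', w03, w03', w04, w04', w05, w05', w12, w12', w13, w13', w14, w14', w15, w15', w23, w23', w24, w24', w25, w25', w34, w34', w35, w35', w45, w45', mul_smul_comm, smul_smul, neg_mul, mul_neg,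
    smul_neg, neg_neg, mul_zero, zero_mul, smul_zero, neg_zero, add_zero, zero_add]
  have h3 : (Complex.I : ℂ) ^ 3 = -Complex.I := by
    rw [pow_succ, Complex.I_sq, neg_one_mul]
  have h4 : (Complex.I : ℂ) ^ 4 = 1 := by
    rw [show (4:ℕ) = 2*2 from rfl, pow_mul, Complex.I_sq, neg_one_sq]
  match_scalars <;> (ring_nf; rw [h3, h4]) <;> ring
end
end

section
/- For t = (t₁₁,t₁₂,t₂₁,t₂₂) ∈ ℂ⁴ set D(t) := t₁₁t₂₂ − t₁₂t₂₁ and q(t) := i(1 + D(t)²) + (t₂₁ − t₁₂)(1 + D(t)), and define Φ = (Φ₁,Φ₂,Φ₃,Φ₄) : ℂ⁴ → ℂ⁴ by Φ₁(t) = i(1 + D(t)²)/q(t), Φ₂(t) = −(t₁₂ + t₂₁)(1 + D(t))/q(t), Φ₃(t) = −i(t₁₁D(t) + t₂₂)/q(t), Φ₄(t) = −i(t₂₂D(t) + t₁₁)/q(t). Then q(0) = i ≠ 0, Φ is holomorphic (ℂ-differentiable) on a neighborhood of 0, Φ(0) = (1,0,0,0), the derivative fderiv ℂ Φ 0 is a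 ℂ-linear automorphism of ℂ⁴, and consequently Φ is a local biholomorphism at 0: there exist open neighborhoods U of 0 and V of (1,0,0,0) such that Φ restricts to a bijection U → V whose inverse is holomorphic on V. -/
/-!
`Φ` is a rational map whose denominator satisfies `q(0) = i`, so it is holomorphic near `0`.
Since `D` vanishes to second order at `0`, only the terms of `Φ` that are linear in `t` survive in
its derivative there, which is `h ↦ (i(h₂₁ − h₁₂), i(h₁₂ + h₂₁), −h₂₂, −h₁₁)`; this map is
invertible, and the holomorphic inverse function theorem gives the local biholomorphism.
-/

/-- `D(t) = t₁₁t₂₂ − t₁₂t₂₁` for `t = (t₁₁, t₁₂, t₂₁, t₂₂)`. -/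
def Dq (t : ℂ × ℂ × ℂ × ℂ) : ℂ := t.1 * t.2.2.2 - t.2.1 * t.2.2.1

/-- `q(t) = i(1 + D(t)²) + (t₂₁ − t₁₂)(1 + D(t))`. -/
noncomputable def qf (t : ℂ × ℂ × ℂ × ℂ) : ℂ :=
  Complex.I * (1 + Dq t ^ 2) + (t.2.2.1 - t.2.1) * (1 + Dq t)

/-- The coordinate map `Φ = (z₁, z₂, z₃, z₄)` of Proposition 5.4. -/
noncomputable def Φ (t : ℂ × ℂ × ℂ × ℂ) : ℂ × ℂ × ℂ × ℂ :=
  (Complex.I * (1 + Dq t ^ 2) / qf t,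
   -((t.2.1 + t.2.2.1) * (1 + Dq t)) / qf t,
   -(Complex.I * (t.1 * Dq t + t.2.2.2)) / qf t,
   -(Complex.I * (t.2.2.2 * Dq t + t.1)) / qf t)

theorem HasFDerivAt.div' {E 𝕜 : Type*} [NontriviallyNormedField 𝕜] [NormedAddCommGroup E]
    [NormedSpace 𝕜 E] {u v : E → 𝕜} {u' v' : E →L[𝕜] 𝕜} {x : E}
    (hu : HasFDerivAt u u' x) (hv : HasFDerivAt v v' x) (hx : v x ≠ 0) :
    HasFDerivAt (fun y => u y / v y) ((v x)⁻¹ • u' - (u x / v x ^ 2) • v') x := by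
  simp only [div_eq_mul_inv]
  refine (hu.mul ((hasDerivAt_inv hx).comp_hasFDerivAt x hv)).congr_fderiv ?_
  ext y
  simp only [add_apply, sub_apply, smul_apply, smul_eq_mul, Function.comp_apply]
  ring

theorem ContDiffAt.exists_bijOn_differentiableOn_inverse {𝕂 E F : Type*} [RCLike 𝕂]
    [NormedAddCommGroup E] [NormedSpace 𝕂 E] [CompleteSpace E] [NormedAddCommGroup F]
    [NormedSpace 𝕂 F] {f : E → F} {f' : E ≃L[𝕂] F} {a : E} (hf : ContDiffAt 𝕂 1 f a)
    (hf' : HasFDerivAt f (f' : E →L[𝕂] F) a) :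
    ∃ U V, IsOpen U ∧ IsOpen V ∧ a ∈ U ∧ f a ∈ V ∧ Set.BijOn f U V ∧
      ∃ g : F → E, DifferentiableOn 𝕂 g V ∧ (∀ x ∈ U, g (f x) = x) ∧ ∀ y ∈ V, f (g y) = y := by
  set e := hf.toOpenPartialHomeomorph f hf' one_ne_zero
  obtain ⟨O, hO, hOopen, hfaO⟩ := eventually_nhds_iff.1 <|
    (hf.to_localInverse hf' one_ne_zero).eventually (by simp)
  -- shrink the target of `e` to where its inverse is still `C¹`
  set e' := (e.symm.restrOpen O hOopen).symm
  refine ⟨e'.source, e'.target, e'.open_source, e'.open_target, ?_, ?_, e'.bijOn, e'.symm,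
    fun y hy => ?_, fun x hx => e'.left_inv hx, fun y hy => e'.right_inv hy⟩
  · exact ⟨hf.mem_toOpenPartialHomeomorph_source hf' one_ne_zero, hfaO⟩
  · exact ⟨hf.image_mem_toOpenPartialHomeomorph_target hf' one_ne_zero, hfaO⟩
  · exact ((hO y hy.2).differentiableAt one_ne_zero).differentiableWithinAt

local notation "ℂ⁴" => ℂ × ℂ × ℂ × ℂ

open Complex

lemma Dq_zero : Dq 0 = 0 := by simp [Dq]

lemma qf_zero : qf 0 = I := by simp [qf, Dq_zero]

lemma Φ_zero : Φ 0 = (1, 0, 0, 0) := by simp [Φ, qf_zero, Dq_zero]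

lemma contDiff_qf {n : WithTop ℕ∞} : ContDiff ℂ n qf := by
  unfold qf Dq
  fun_prop

lemma contDiffAt_Φ {n : WithTop ℕ∞} {t : ℂ⁴} (ht : qf t ≠ 0) : ContDiffAt ℂ n Φ t := by
  have hq : ContDiffAt ℂ n qf t := contDiff_qf.contDiffAt
  unfold Φ
  refine .prodMk (.div ?_ hq ht) (.prodMk (.div ?_ hq ht) (.prodMk (.div ?_ hq ht) (.div ?_ hq ht)))
    <;> unfold Dq <;> fun_prop

noncomputable def dΦ₀ : ℂ⁴ ≃L[ℂ] ℂ⁴ := LinearEquiv.toContinuousLinearEquiv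
  { toFun h := (I * (h.2.2.1 - h.2.1), I * (h.2.1 + h.2.2.1), -h.2.2.2, -h.1)
    invFun k := (-k.2.2.2, I / 2 * (k.1 - k.2.1), -I / 2 * (k.1 + k.2.1), -k.2.2.1)
    map_add' h k := by ext <;> simp <;> ring
    map_smul' c h := by ext <;> simp <;> ring
    left_inv h := by ext <;> simp <;> ring_nf <;> simp [I_sq]
    right_inv k := by ext <;> simp <;> ring_nf <;> simp [I_sq] }

lemma dΦ₀_apply (h : ℂ⁴) :
    (dΦ₀ : ℂ⁴ →L[ℂ] ℂ⁴) h = (I * (h.2.2.1 - h.2.1), I * (h.2.1 + h.2.2.1), -h.2.2.2, -h.1) :=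
  rfl

lemma hasFDerivAt_Dq_zero : HasFDerivAt Dq (0 : ℂ⁴ →L[ℂ] ℂ) 0 := by
  have h := hasFDerivAt_id (𝕜 := ℂ) (0 : ℂ⁴)
  exact ((h.fst.mul h.snd.snd.snd).sub (h.snd.fst.mul h.snd.snd.fst)).congr_fderiv
    (by ext <;> simp)

open ContinuousLinearMap in
lemma hasFDerivAt_qf_zero :
    HasFDerivAt qf (fst ℂ ℂ ℂ ∘L snd ℂ ℂ (ℂ × ℂ) ∘L snd ℂ ℂ (ℂ × ℂ × ℂ) -
      fst ℂ ℂ (ℂ × ℂ) ∘L snd ℂ ℂ (ℂ × ℂ × ℂ)) 0 := by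
  have h := hasFDerivAt_id (𝕜 := ℂ) (0 : ℂ⁴)
  have hD := hasFDerivAt_Dq_zero
  exact ((((hD.pow 2).const_add 1).const_mul I).add
    ((h.snd.snd.fst.sub h.snd.fst).mul (hD.const_add 1))).congr_fderiv (by ext <;> simp [Dq])

lemma hasFDerivAt_Φ_zero : HasFDerivAt Φ (dΦ₀ : ℂ⁴ →L[ℂ] ℂ⁴) 0 := by
  have h := hasFDerivAt_id (𝕜 := ℂ) (0 : ℂ⁴)
  have hD := hasFDerivAt_Dq_zero
  have hq := hasFDerivAt_qf_zero
  have hq0 : qf 0 ≠ 0 := qf_zero ▸ I_ne_zero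
  unfold Φ
  refine (((((hD.pow 2).const_add 1).const_mul I).div' hq hq0).prodMk
    (((((h.snd.fst.add h.snd.snd.fst).mul (hD.const_add 1)).neg).div' hq hq0).prodMk
    ((((((h.fst.mul hD).add h.snd.snd.snd).const_mul I).neg).div' hq hq0).prodMk
    (((((h.snd.snd.snd.mul hD).add h.fst).const_mul I).neg).div' hq hq0)))).congr_fderiv ?_
  refine ContinuousLinearMap.ext fun h => ?_
  rw [dΦ₀_apply]
  simp [qf_zero, Dq_zero, ← mul_assoc, div_neg]
  ring

theorem coordinates_on_Delta_gamma :
    -- q(0) = i ≠ 0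
    qf 0 = Complex.I ∧ Complex.I ≠ 0 ∧
    -- Φ is holomorphic on a neighbourhood of 0
    (∃ U ∈ nhds (0 : ℂ × ℂ × ℂ × ℂ), DifferentiableOn ℂ Φ U) ∧
    -- Φ(0) = (1,0,0,0)
    Φ 0 = (1, 0, 0, 0) ∧
    -- the derivative of Φ at 0 is a ℂ-linear automorphism of ℂ⁴
    (∃ A : (ℂ × ℂ × ℂ × ℂ) ≃L[ℂ] (ℂ × ℂ × ℂ × ℂ),
      (A : (ℂ × ℂ × ℂ × ℂ) →L[ℂ] (ℂ × ℂ × ℂ × ℂ)) = fderiv ℂ Φ 0) ∧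
    -- Φ is a local biholomorphism at 0
    (∃ U V : Set (ℂ × ℂ × ℂ × ℂ), IsOpen U ∧ IsOpen V ∧
      (0 : ℂ × ℂ × ℂ × ℂ) ∈ U ∧ ((1, 0, 0, 0) : ℂ × ℂ × ℂ × ℂ) ∈ V ∧
      Set.BijOn Φ U V ∧
      ∃ g : ℂ × ℂ × ℂ × ℂ → ℂ × ℂ × ℂ × ℂ, DifferentiableOn ℂ g V ∧
        (∀ x ∈ U, g (Φ x) = x) ∧ (∀ y ∈ V, Φ (g y) = y)) := by
  have hq0 : qf 0 ≠ 0 := qf_zero ▸ I_ne_zero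
  refine ⟨qf_zero, I_ne_zero, ⟨{t | qf t ≠ 0}, ?_, fun t ht => ?_⟩, Φ_zero,
    ⟨dΦ₀, hasFDerivAt_Φ_zero.fderiv.symm⟩, ?_⟩
  · exact (isOpen_ne_fun (contDiff_qf (n := 0)).continuous continuous_const).mem_nhds hq0
  · exact ((contDiffAt_Φ (n := 1) ht).differentiableAt one_ne_zero).differentiableWithinAt
  · simpa only [Φ_zero] using
      (contDiffAt_Φ hq0).exists_bijOn_differentiableOn_inverse hasFDerivAt_Φ_zero
end

section
/- In the exterior algebra of ℂ⁶ set φ₁ := α∧γ∧ᾱ, φ₂ := α∧γ∧β̄, φ₃ := β∧γ∧ᾱ, φ₄ := β∧γ∧β̄ and (their formal conjugates) ψ₁ := ᾱ∧γ̄∧α, ψ₂ := ᾱ∧γ̄∧β, ψ₃ := β̄∧γ̄∧α, ψ₄ := β̄∧γ̄∧β. Then φ_j∧ψ_k = (i·G_{jk})·Ω for all 1 ≤ j,k ≤ 4, where G is the 4×4 matrix with rows (0,0,0,−1), (0,1,0,0), (0,0,1,0), (−1,0,0,0); moreover G is Hermitian and has exactly one negative eigenvalue and three positive eigenvalues. (G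 is the Gram matrix of the Hodge–Riemann form H(u,v) = −i∫_X u∧v̄ in the basis [α∧γ∧ᾱ], [α∧γ∧β̄], [β∧γ∧ᾱ], [β∧γ∧β̄] of H^{2,1}_[γ](X,ℂ), so H has signature (−,+,+,+) on H^{2,1}_[γ](X,ℂ), which is Corollary 5.3 of the paper.) -/
noncomputable section

/-- The generators `φ₁, φ₂, φ₃, φ₄` of `H^{2,1}_[γ](X,ℂ)`. -/
def φv : Fin 4 → Λ6 := ![α * γ * α', α * γ * β', β * γ * α', β * γ * β']

/-- Their formal conjugates `ψ₁, ψ₂, ψ₃, ψ₄`. -/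
def ψv : Fin 4 → Λ6 := ![α' * γ' * α, α' * γ' * β, β' * γ' * α, β' * γ' * β]

/-- The Gram matrix `G` of the Hodge–Riemann form `H(u,v) = −i∫_X u∧v̄` on
`H^{2,1}_[γ](X,ℂ)`. -/
def Gm : Matrix (Fin 4) (Fin 4) ℂ := !![0, 0, 0, -1; 0, 1, 0, 0; 0, 0, 1, 0; -1, 0, 0, 0]

/-!
A wedge product of six basis vectors `v_{s 0} ∧ ⋯ ∧ v_{s 5}` of `ℂ⁶` equals `ε(s) • v₀ ∧ ⋯ ∧ v₅`,
where `ε` is the Levi-Civita symbol, and `Ω = i • v₀ ∧ ⋯ ∧ v₅`; reading off the sixteen symbols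
`ε(φ_j, ψ_k)` gives `φ_j ∧ ψ_k = -ε • v₀ ∧ ⋯ ∧ v₅ = (i G_{jk}) • Ω`. Since `G² = 1`, every
eigenvalue of `G` is `±1`, and `trace G = 2` then leaves exactly one eigenvalue `-1`.
-/

open Finset ExteriorAlgebra

def leviCivita {n : ℕ} (s : Fin n → Fin n) : ℤ :=
  ∏ i, ∏ j ∈ Ioi i, Int.sign ((s j : ℤ) - s i)

theorem leviCivita_eq_zero_of_not_injective {n : ℕ} {s : Fin n → Fin n}
    (hs : ¬Function.Injective s) : leviCivita s = 0 := by
  obtain ⟨i, j, hij, hne⟩ : ∃ i j, s i = s j ∧ i ≠ j := by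
    simpa [Function.Injective] using hs
  wlog hlt : i < j generalizing i j
  · exact this j i hij.symm hne.symm (lt_of_le_of_ne (not_lt.mp hlt) hne.symm)
  refine prod_eq_zero (mem_univ i) (prod_eq_zero (mem_Ioi.mpr hlt) ?_)
  simp [hij]

theorem leviCivita_perm {n : ℕ} (σ : Equiv.Perm (Fin n)) :
    leviCivita σ = Equiv.Perm.sign σ := by
  rw [Equiv.Perm.sign_eq_prod_prod_Ioi, leviCivita]
  push_cast
  refine prod_congr rfl fun i _ => prod_congr rfl fun j hj => ?_
  have hne : σ i ≠ σ j := σ.injective.ne (mem_Ioi.mp hj).ne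
  rcases hne.lt_or_gt with h | h
  · simp [h, Int.sign_eq_one_of_pos]
  · simp [h, h.not_gt]

theorem AlternatingMap.map_comp_eq_leviCivita_smul {R M N : Type*} [Semiring R]
    [AddCommMonoid M] [Module R M] [AddCommGroup N] [Module R N] {n : ℕ}
    (f : M [⋀^Fin n]→ₗ[R] N) (v : Fin n → M) (s : Fin n → Fin n) :
    f (v ∘ s) = leviCivita s • f v := by
  by_cases hs : Function.Injective s
  · let σ := Equiv.ofBijective s hs.bijective_of_finite
    rw [show s = σ from rfl, f.map_perm, leviCivita_perm, Units.smul_def]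
  · rw [leviCivita_eq_zero_of_not_injective hs, zero_smul]
    exact f.map_eq_zero_of_not_injective _ fun h => hs h.of_comp

theorem Matrix.IsHermitian.eigenvalues_eq_one_or_neg_one {𝕜 n : Type*} [RCLike 𝕜] [Fintype n]
    [DecidableEq n] {A : Matrix n n 𝕜} (hA : A.IsHermitian) (hA₂ : A * A = 1) (i : n) :
    hA.eigenvalues i = 1 ∨ hA.eigenvalues i = -1 := by
  have : Nonempty n := ⟨i⟩
  have h := spectrum.pow_mem_pow A 2 (hA.eigenvalues_mem_spectrum_real i)
  rw [sq A, hA₂, spectrum.one_eq] at h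
  exact sq_eq_one_iff.mp h

theorem exists_neg_forall_ne_pos_of_sum_eq_card_sub_two {ι : Type*} [Fintype ι] {f : ι → ℝ}
    (hf : ∀ i, f i = 1 ∨ f i = -1) (hsum : ∑ i, f i = Fintype.card ι - 2) :
    ∃ i₀, f i₀ < 0 ∧ ∀ j, j ≠ i₀ → 0 < f j := by
  classical
  set S := univ.filter fun i => f i = -1
  have hsum' : ∑ i, f i = Fintype.card ι - 2 * #S :=
    calc ∑ i, f i = ∑ i, (1 - 2 * if f i = -1 then (1 : ℝ) else 0) :=
          sum_congr rfl fun i _ => by rcases hf i with h | h <;> norm_num [h]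
      _ = Fintype.card ι - 2 * #S := by rw [sum_sub_distrib, ← mul_sum, sum_boole]; simp [S]
  obtain ⟨i₀, hS⟩ := card_eq_one.mp (by exact_mod_cast (by linarith : (#S : ℝ) = 1))
  have hmem : ∀ j, f j = -1 ↔ j = i₀ := fun j => by simpa [S] using Finset.ext_iff.mp hS j
  refine ⟨i₀, by linarith [(hmem i₀).mpr rfl], fun j hj => ?_⟩
  rcases hf j with h | h
  · linarith
  · exact absurd ((hmem j).mp h) hj

def vol : Λ6 := ιMulti ℂ 6 fun i => Pi.single i 1

theorem ιMulti_single_eq_leviCivita_smul_vol (s : Fin 6 → Fin 6) :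
    ιMulti ℂ 6 (fun i => Pi.single (s i) 1) = leviCivita s • vol :=
  (ιMulti ℂ 6).map_comp_eq_leviCivita_smul (fun i => Pi.single i 1) s

def φIdx : Fin 4 → Fin 3 → Fin 6 := ![![0, 2, 3], ![0, 2, 4], ![1, 2, 3], ![1, 2, 4]]

def ψIdx : Fin 4 → Fin 3 → Fin 6 := ![![3, 5, 0], ![3, 5, 1], ![4, 5, 0], ![4, 5, 1]]

theorem φv_eq_ιMulti (j : Fin 4) : φv j = ιMulti ℂ 3 fun i => Pi.single (φIdx j i) 1 := by
  fin_cases j <;> simp [φv, φIdx, α, β, γ, α', β', gen, mul_assoc, Matrix.vecTail]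

theorem ψv_eq_ιMulti (k : Fin 4) : ψv k = ιMulti ℂ 3 fun i => Pi.single (ψIdx k i) 1 := by
  fin_cases k <;> simp [ψv, ψIdx, α, β, α', β', γ', gen, mul_assoc, Matrix.vecTail]

theorem Ω_eq_I_smul_vol : Ω = Complex.I • vol := by
  have h : α * α' * (β * β') * (γ * γ') =
      ιMulti ℂ 6 fun i => Pi.single (![0, 3, 1, 4, 2, 5] i) 1 := by
    simp [α, β, γ, α', β', γ', gen, mul_assoc, Matrix.vecTail]
  have hε : leviCivita (![0, 3, 1, 4, 2, 5] : Fin 6 → Fin 6) = -1 := by decide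
  rw [Ω, smul_mul_smul_comm, smul_mul_smul_comm, h, ιMulti_single_eq_leviCivita_smul_vol, hε]
  simp only [smul_smul, ← Int.cast_smul_eq_zsmul ℂ, Int.reduceNeg, Int.cast_neg, Int.cast_one]
  congr 1
  rw [Complex.I_mul_I]
  ring

theorem φv_mul_ψv (j k : Fin 4) :
    φv j * ψv k = leviCivita (Fin.append (φIdx j) (ψIdx k)) • vol := by
  rw [φv_eq_ιMulti, ψv_eq_ιMulti, ιMulti_mul_ιMulti, ← ιMulti_single_eq_leviCivita_smul_vol]
  congr 1
  funext i
  refine Fin.addCases (fun _ => ?_) (fun _ => ?_) i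
  · simp only [Fin.append_left]
  · simp only [Fin.append_right]

theorem leviCivita_φIdx_append_ψIdx (j k : Fin 4) :
    (leviCivita (Fin.append (φIdx j) (ψIdx k)) : ℂ) = -Gm j k := by
  fin_cases j <;> fin_cases k <;> simp [Gm] <;> norm_cast

theorem φv_mul_ψv_eq_Gm_smul_Ω (j k : Fin 4) : φv j * ψv k = (Complex.I * Gm j k) • Ω := by
  rw [φv_mul_ψv, Ω_eq_I_smul_vol, smul_smul, ← Int.cast_smul_eq_zsmul ℂ,
    leviCivita_φIdx_append_ψIdx, mul_right_comm, Complex.I_mul_I, neg_one_mul]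

theorem Gm_isHermitian : Gm.IsHermitian := by
  ext i j
  fin_cases i <;> fin_cases j <;> simp [Gm]

theorem Gm_mul_self : Gm * Gm = 1 := by
  ext i j
  fin_cases i <;> fin_cases j <;> simp [Gm, Matrix.mul_apply, Fin.sum_univ_four]

theorem Gm_trace : Gm.trace = 2 := by
  simp [Gm, Matrix.trace, Fin.sum_univ_four]
  norm_num

/-- `φ_j∧ψ_k = i·G_{jk}·Ω`, `G` is Hermitian with exactly one negative and three positive
eigenvalues: `H` has signature `(−,+,+,+)` on `H^{2,1}_[γ](X,ℂ)` (Corollary 5.3). -/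
theorem hodge_riemann_form_signature_on_H21_gamma :
    (∀ j k : Fin 4, φv j * ψv k = (Complex.I * Gm j k) • Ω) ∧
    Gm.IsHermitian ∧
    (∀ hG : Gm.IsHermitian, ∃ i₀ : Fin 4,
      hG.eigenvalues i₀ < 0 ∧ ∀ j : Fin 4, j ≠ i₀ → 0 < hG.eigenvalues j) := by
  refine ⟨φv_mul_ψv_eq_Gm_smul_Ω, Gm_isHermitian, fun hG => ?_⟩
  have hsum : ∑ i, hG.eigenvalues i = 2 := by
    simpa [Gm_trace] using (congrArg Complex.re hG.trace_eq_sum_eigenvalues).symm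
  exact exists_neg_forall_ne_pos_of_sum_eq_card_sub_two
    (hG.eigenvalues_eq_one_or_neg_one Gm_mul_self) (by rw [hsum]; norm_num)
end
end
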